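/- arXiv:2002.08057 — 2 statements merged into one kernel-verified Lean document; each statement's English description precedes it below -/
import Mathlib

section
/- For any positive integer m and any ε > 0, there exist constants C, C' > 0 such that for every α ∈ ℝ^m and every positive integer N, there exists a positive integer q with C'·N ≤ q ≤ C·N such that ‖q·α_i‖ < ε for all i, where ‖x‖ denotes the distance from x to the nearest integer. -/
/-- If two reals have fractional parts landing in the same subinterval of
length `1/n`, their fractional parts differ by less than `1/n`. -/
lemma fract_close_of_floor_eq {n : ℕ} (hn : 0 < n) {a b : ℝ}
    (h : ⌊Int.fract a * n⌋ = ⌊Int.fract b * n⌋) :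
    |Int.fract a - Int.fract b| < 1 / n := by
  have hn' : (0:ℝ) < n := by exact_mod_cast hn
  have ha1 : (⌊Int.fract a * n⌋ : ℝ) ≤ Int.fract a * n := Int.floor_le _
  have ha2 : Int.fract a * n < ⌊Int.fract a * n⌋ + 1 := Int.lt_floor_add_one _
  have hb1 : (⌊Int.fract b * n⌋ : ℝ) ≤ Int.fract b * n := Int.floor_le _
  have hb2 : Int.fract b * n < ⌊Int.fract b * n⌋ + 1 := Int.lt_floor_add_one _
  rw [h] at ha1 ha2
  have habs : |Int.fract a * n - Int.fract b * n| < 1 := by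
    rw [abs_lt]; constructor <;> nlinarith
  have : |Int.fract a - Int.fract b| * n < 1 := by
    calc |Int.fract a - Int.fract b| * n = |(Int.fract a - Int.fract b) * n| := by
          rw [abs_mul, abs_of_nonneg hn'.le]
      _ = |Int.fract a * n - Int.fract b * n| := by ring_nf
      _ < 1 := habs
  rw [div_eq_inv_mul, lt_inv_mul_iff₀ hn', mul_comm]
  exact this

/-- Simultaneous Diophantine approximation with denominator bounded below and
above by constant multiples of `N`: for any `m ≥ 1` and `ε > 0` there are
constants `C, C' > 0` such that for every `α ∈ ℝ^m` and `N ≥ 1` there is a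
positive integer `q` with `C'·N ≤ q ≤ C·N` and `‖q·α_i‖ < ε` for all `i`,
where `‖x‖` is the distance of `x` to the nearest integer. -/
theorem stmt0 (m : ℕ) (hm : 0 < m) (ε : ℝ) (hε : 0 < ε) :
    ∃ C C' : ℝ, 0 < C ∧ 0 < C' ∧
      ∀ (α : Fin m → ℝ) (N : ℕ), 0 < N →
        ∃ q : ℕ, 0 < q ∧ C' * N ≤ (q : ℝ) ∧ (q : ℝ) ≤ C * N ∧
          ∀ i : Fin m, ∃ k : ℤ, |(q : ℝ) * α i - (k : ℝ)| < ε := by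
  set n : ℕ := ⌈1/ε⌉₊ with hn
  have hn1 : 1 ≤ n := Nat.one_le_ceil_iff.mpr (by positivity)
  have hn0 : 0 < n := hn1
  have hnR : (0:ℝ) < n := by exact_mod_cast hn0
  have hinv : 1 / (n:ℝ) ≤ ε := by
    rw [div_le_iff₀ hnR]
    have h : 1/ε ≤ (n:ℝ) := Nat.le_ceil _
    rw [div_le_iff₀ hε] at h
    linarith
  refine ⟨(n^m : ℕ), 1, by positivity, one_pos, ?_⟩
  intro α N hN
  set β : Fin m → ℝ := fun i => (N:ℝ) * α i with hβ
  -- pigeonhole map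
  have hbox : ∀ (t : ℕ) (i : Fin m), (⌊Int.fract ((t:ℝ) * β i) * n⌋).toNat < n := by
    intro t i
    have h1 : Int.fract ((t:ℝ) * β i) * n < n := by
      have := Int.fract_lt_one ((t:ℝ) * β i)
      nlinarith
    have h2 : ⌊Int.fract ((t:ℝ) * β i) * n⌋ < (n:ℤ) := by
      rw [Int.floor_lt]; exact_mod_cast h1
    omega
  set f : Fin (n^m + 1) → (Fin m → Fin n) :=
    fun t i => ⟨(⌊Int.fract ((t:ℝ) * β i) * n⌋).toNat, hbox t i⟩ with hf
  have hcard : Fintype.card (Fin m → Fin n) < Fintype.card (Fin (n^m + 1)) := by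
    simp [Fintype.card_fun]
  obtain ⟨t1, t2, hne, heq⟩ := Fintype.exists_ne_map_eq_of_card_lt f hcard
  -- order them
  wlog hlt : t1 < t2 generalizing t1 t2
  · exact this t2 t1 hne.symm heq.symm (by omega)
  have hfract : ∀ i : Fin m,
      |Int.fract ((t1:ℝ) * β i) - Int.fract ((t2:ℝ) * β i)| < 1 / n := by
    intro i
    apply fract_close_of_floor_eq hn0
    have := congrFun heq i
    have h1 : 0 ≤ ⌊Int.fract ((t1:ℝ) * β i) * n⌋ :=
      Int.floor_nonneg.mpr (mul_nonneg (Int.fract_nonneg _) hnR.le)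
    have h2 : 0 ≤ ⌊Int.fract ((t2:ℝ) * β i) * n⌋ :=
      Int.floor_nonneg.mpr (mul_nonneg (Int.fract_nonneg _) hnR.le)
    have h3 := congrArg Fin.val this
    simp only [hf] at h3
    omega
  refine ⟨((t2:ℕ) - (t1:ℕ)) * N, Nat.mul_pos (by omega) hN, ?_, ?_, ?_⟩
  · have h1 : 1 ≤ (t2:ℕ) - (t1:ℕ) := by omega
    have : (N:ℝ) ≤ (((t2:ℕ) - (t1:ℕ)) * N : ℕ) := by
      push_cast
      have h1' : (1:ℝ) ≤ ((t2:ℕ) - (t1:ℕ) : ℕ) := by exact_mod_cast h1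
      have hN' : (0:ℝ) < N := by exact_mod_cast hN
      nlinarith
    linarith
  · have h1 : (t2:ℕ) - (t1:ℕ) ≤ n^m := by have := t2.isLt; omega
    push_cast
    have hNR : (0:ℝ) ≤ (N:ℝ) := Nat.cast_nonneg _
    have : (((t2:ℕ) - (t1:ℕ) : ℕ) : ℝ) ≤ (n:ℝ)^m := by exact_mod_cast h1
    nlinarith
  · intro i
    refine ⟨⌊(t2:ℝ) * β i⌋ - ⌊(t1:ℝ) * β i⌋, ?_⟩
    have hsub : ((((t2:ℕ) - (t1:ℕ)) * N : ℕ) : ℝ) * α i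
        = (t2:ℝ) * β i - (t1:ℝ) * β i := by
      show ((((t2:ℕ) - (t1:ℕ)) * N : ℕ) : ℝ) * α i
        = ((t2:ℕ):ℝ) * ((N:ℝ) * α i) - ((t1:ℕ):ℝ) * ((N:ℝ) * α i)
      push_cast [Nat.cast_sub (le_of_lt hlt : (t1:ℕ) ≤ (t2:ℕ))]
      ring
    have key : (t2:ℝ) * β i - (t1:ℝ) * β i - ((⌊(t2:ℝ) * β i⌋ : ℝ) - (⌊(t1:ℝ) * β i⌋ : ℝ))
        = Int.fract ((t2:ℝ) * β i) - Int.fract ((t1:ℝ) * β i) := by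
      simp only [Int.fract]; ring
    rw [hsub]
    push_cast
    calc |(t2:ℝ) * β i - (t1:ℝ) * β i - ((⌊(t2:ℝ) * β i⌋ : ℝ) - (⌊(t1:ℝ) * β i⌋ : ℝ))|
        = |Int.fract ((t2:ℝ) * β i) - Int.fract ((t1:ℝ) * β i)| := by rw [key]
      _ = |Int.fract ((t1:ℝ) * β i) - Int.fract ((t2:ℝ) * β i)| := abs_sub_comm _ _
      _ < 1 / n := hfract i
      _ ≤ ε := hinv
end

section
/- Define the denominator d(g) of g ∈ SL_n(ℚ_p) by d(g) = p^{−n_l} where (n_0 ≥ ... ≥ n_l) (with l = n−1) is the tuple of p-adic valuations of the diagonal entries in the Cartan decomposition g ∈ K_p z K_p, z = diag(p^{n_0},...,p^{n_l}), K_p = SL_n(ℤ_p). Then d(g) equals the smallest p-power p^m such that p^m·g has all entries in ℤ_p, and satisfies d(g g') ≤ d(g)·d(g') and d(g^{−1}) ≤ d(g)^{n−1}. -/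
/-- The exponent `m` of the denominator `d(g) = p^m` of a matrix over `ℚ_p`:
the least `m : ℕ` such that `p^m · g` has all entries in `ℤ_p`. -/
noncomputable def padicDenExp (p n : ℕ) [Fact p.Prime]
    (g : Matrix (Fin n) (Fin n) ℚ_[p]) : ℕ :=
  sInf {m : ℕ | ∀ i j, ‖(p : ℚ_[p]) ^ m * g i j‖ ≤ 1}

/-!
Because `ℚ_p` is ultrametric, the largest entry norm of a matrix is submultiplicative, and a
determinant of an `m × m` matrix with entries of norm `≤ c` has norm `≤ c ^ m`. Hence `SL_n(ℤ_p)`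
is closed under inversion (the inverse is the adjugate) and multiplying by its elements on either
side does not change the denominator. So `d(g) = d(z)`, which is read off the diagonal as
`p ^ (-ν_{n-1})`; submultiplicativity gives `d(gg') ≤ d(g) d(g')`, and the adjugate bound gives
`d(g⁻¹) ≤ d(g) ^ (n - 1)`.
-/

open Matrix IsUltrametricDist

section Ultrametric

theorem Matrix.norm_mul_apply_le {R : Type*} [NormedRing R] [IsUltrametricDist R]
    {l m o : Type*} [Fintype m] {A : Matrix l m R} {B : Matrix m o R} {a b : ℝ}
    (ha : 0 ≤ a) (hb : 0 ≤ b) (hA : ∀ i j, ‖A i j‖ ≤ a) (hB : ∀ i j, ‖B i j‖ ≤ b)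
    (i : l) (k : o) : ‖(A * B) i k‖ ≤ a * b :=
  norm_sum_le_of_forall_le_of_nonneg (mul_nonneg ha hb) fun j _ =>
    (norm_mul_le _ _).trans (mul_le_mul (hA i j) (hB j k) (norm_nonneg _) ha)

variable {R : Type*} [NormedCommRing R] [NormOneClass R] [IsUltrametricDist R]

theorem Matrix.norm_det_le_pow {ι : Type*} [Fintype ι] [DecidableEq ι] {A : Matrix ι ι R}
    {c : ℝ} (hc : 0 ≤ c) (hA : ∀ i j, ‖A i j‖ ≤ c) : ‖A.det‖ ≤ c ^ Fintype.card ι := by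
  rw [det_apply']
  refine norm_sum_le_of_forall_le_of_nonneg (pow_nonneg hc _) fun σ _ => ?_
  calc ‖((Equiv.Perm.sign σ : ℤ) : R) * ∏ i, A (σ i) i‖
      ≤ 1 * ∏ i, ‖A (σ i) i‖ :=
        (norm_mul_le _ _).trans <| mul_le_mul (norm_intCast_le_one R _)
          (Finset.norm_prod_le _ _) (norm_nonneg _) zero_le_one
    _ ≤ c ^ Fintype.card ι := by
        rw [one_mul, ← Finset.card_univ, ← Finset.prod_const]
        exact Finset.prod_le_prod (fun _ _ => norm_nonneg _) fun _ _ => hA _ _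

theorem Matrix.norm_adjugate_apply_le {n : ℕ} {A : Matrix (Fin n) (Fin n) R} {c : ℝ}
    (hc : 0 ≤ c) (hA : ∀ i j, ‖A i j‖ ≤ c) (i j : Fin n) : ‖A.adjugate i j‖ ≤ c ^ (n - 1) := by
  cases n with
  | zero => exact i.elim0
  | succ n =>
    rw [adjugate_fin_succ_eq_det_submatrix]
    have hsign : ‖((-1) ^ (j + i : ℕ) : R)‖ ≤ 1 := by
      exact_mod_cast norm_intCast_le_one R ((-1) ^ (j + i : ℕ))
    have hminor : ‖(A.submatrix j.succAbove i.succAbove).det‖ ≤ c ^ n := by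
      simpa using norm_det_le_pow (A := A.submatrix j.succAbove i.succAbove) hc fun _ _ => hA _ _
    calc _ ≤ 1 * c ^ n :=
          (norm_mul_le _ _).trans <| mul_le_mul hsign hminor (norm_nonneg _) zero_le_one
      _ = c ^ (n + 1 - 1) := by simp

theorem Matrix.forall_norm_diagonal_apply_le_iff {ι E : Type*} [DecidableEq ι]
    [SeminormedAddGroup E] {d : ι → E} {c : ℝ} (hc : 0 ≤ c) :
    (∀ i j : ι, ‖diagonal d i j‖ ≤ c) ↔ ∀ i, ‖d i‖ ≤ c := by
  refine ⟨fun h i => by simpa using h i i, fun h i j => ?_⟩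
  rcases eq_or_ne i j with rfl | hij
  · simpa using h i
  · simpa [diagonal_apply_ne _ hij] using hc

end Ultrametric

section padicDenExp

variable {p : ℕ} [Fact p.Prime] {n : ℕ}

theorem one_lt_prime_cast : (1 : ℝ) < p := by
  exact_mod_cast (Fact.out : p.Prime).one_lt

theorem Padic.norm_prime_pow_mul_le_one_iff (m : ℕ) (x : ℚ_[p]) :
    ‖(p : ℚ_[p]) ^ m * x‖ ≤ 1 ↔ ‖x‖ ≤ (p : ℝ) ^ m := by
  rw [norm_mul, norm_pow, Padic.norm_p, inv_pow,
    inv_mul_le_iff₀ (pow_pos (zero_lt_one.trans one_lt_prime_cast) m), mul_one]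

theorem exists_forall_norm_apply_le_prime_pow (A : Matrix (Fin n) (Fin n) ℚ_[p]) :
    ∃ m : ℕ, ∀ i j, ‖A i j‖ ≤ (p : ℝ) ^ m := by
  have hlarge : ∀ᶠ m in Filter.atTop, ∀ i j, ‖A i j‖ ≤ (p : ℝ) ^ m := by
    simp only [Filter.eventually_all]
    exact fun i j => (tendsto_pow_atTop_atTop_of_one_lt one_lt_prime_cast).eventually_ge_atTop _
  exact hlarge.exists

theorem padicDenExp_le_iff {A : Matrix (Fin n) (Fin n) ℚ_[p]} {m : ℕ} :
    padicDenExp p n A ≤ m ↔ ∀ i j, ‖A i j‖ ≤ (p : ℝ) ^ m := by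
  simp only [padicDenExp, Padic.norm_prime_pow_mul_le_one_iff]
  refine ⟨fun h i j => ?_, fun h => Nat.sInf_le h⟩
  exact (Nat.sInf_mem (exists_forall_norm_apply_le_prime_pow A) i j).trans
    (pow_le_pow_right₀ one_lt_prime_cast.le h)

theorem norm_apply_le_prime_pow_padicDenExp (A : Matrix (Fin n) (Fin n) ℚ_[p]) (i j : Fin n) :
    ‖A i j‖ ≤ (p : ℝ) ^ padicDenExp p n A :=
  padicDenExp_le_iff.1 le_rfl i j

theorem padicDenExp_eq_zero_iff {A : Matrix (Fin n) (Fin n) ℚ_[p]} :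
    padicDenExp p n A = 0 ↔ ∀ i j, ‖A i j‖ ≤ 1 := by
  simpa using padicDenExp_le_iff (A := A) (m := 0)

theorem padicDenExp_mul_le (A B : Matrix (Fin n) (Fin n) ℚ_[p]) :
    padicDenExp p n (A * B) ≤ padicDenExp p n A + padicDenExp p n B := by
  rw [padicDenExp_le_iff, pow_add]
  exact norm_mul_apply_le (by positivity) (by positivity)
    (norm_apply_le_prime_pow_padicDenExp A) (norm_apply_le_prime_pow_padicDenExp B)

theorem padicDenExp_adjugate_le (A : Matrix (Fin n) (Fin n) ℚ_[p]) :
    padicDenExp p n A.adjugate ≤ (n - 1) * padicDenExp p n A := by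
  rw [padicDenExp_le_iff, mul_comm, pow_mul]
  exact norm_adjugate_apply_le (by positivity) (norm_apply_le_prime_pow_padicDenExp A)

theorem padicDenExp_mul_mul_le_of_eq_zero {k₁ k₂ : Matrix (Fin n) (Fin n) ℚ_[p]}
    (hk₁ : padicDenExp p n k₁ = 0) (hk₂ : padicDenExp p n k₂ = 0)
    (A : Matrix (Fin n) (Fin n) ℚ_[p]) : padicDenExp p n (k₁ * A * k₂) ≤ padicDenExp p n A := by
  calc padicDenExp p n (k₁ * A * k₂)
      ≤ padicDenExp p n k₁ + padicDenExp p n A + padicDenExp p n k₂ :=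
        (padicDenExp_mul_le _ _).trans (Nat.add_le_add_right (padicDenExp_mul_le _ _) _)
    _ = padicDenExp p n A := by rw [hk₁, hk₂, zero_add, add_zero]

theorem padicDenExp_adjugate_eq_zero {k : Matrix (Fin n) (Fin n) ℚ_[p]}
    (hk : padicDenExp p n k = 0) : padicDenExp p n k.adjugate = 0 := by
  simpa [hk] using padicDenExp_adjugate_le k

theorem padicDenExp_mul_mul_eq_of_eq_zero {k₁ k₂ : Matrix (Fin n) (Fin n) ℚ_[p]}
    (hdet₁ : k₁.det = 1) (hdet₂ : k₂.det = 1)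
    (hk₁ : padicDenExp p n k₁ = 0) (hk₂ : padicDenExp p n k₂ = 0)
    (A : Matrix (Fin n) (Fin n) ℚ_[p]) : padicDenExp p n (k₁ * A * k₂) = padicDenExp p n A := by
  refine (padicDenExp_mul_mul_le_of_eq_zero hk₁ hk₂ A).antisymm ?_
  calc padicDenExp p n A = padicDenExp p n (k₁.adjugate * (k₁ * A * k₂) * k₂.adjugate) := by
        rw [← Matrix.mul_assoc, ← Matrix.mul_assoc, adjugate_mul, Matrix.mul_assoc,
          mul_adjugate, hdet₁, hdet₂, one_smul, Matrix.one_mul, Matrix.mul_one]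
    _ ≤ padicDenExp p n (k₁ * A * k₂) :=
        padicDenExp_mul_mul_le_of_eq_zero (padicDenExp_adjugate_eq_zero hk₁)
          (padicDenExp_adjugate_eq_zero hk₂) _

theorem padicDenExp_diagonal_zpow {ν : Fin n → ℤ} {i₀ : Fin n} (hmin : ∀ i, ν i₀ ≤ ν i) :
    padicDenExp p n (diagonal fun i => (p : ℚ_[p]) ^ ν i) = (-ν i₀).toNat := by
  refine eq_of_forall_ge_iff fun m => ?_
  rw [padicDenExp_le_iff, forall_norm_diagonal_apply_le_iff (by positivity), Int.toNat_le]
  simp only [Padic.norm_p_zpow, ← zpow_natCast, zpow_le_zpow_iff_right₀ one_lt_prime_cast]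
  exact ⟨fun h => h i₀, fun h i => (neg_le_neg (hmin i)).trans h⟩

end padicDenExp

/-- If `g ∈ SL_n(ℚ_p)` has Cartan decomposition `g = k₁ z k₂` with
`k₁, k₂ ∈ SL_n(ℤ_p)` and `z = diag(p^{ν_0},…,p^{ν_{n-1}})`, `ν_0 ≥ … ≥ ν_{n-1}`,
`∑ ν_i = 0`, then the denominator `d(g)` equals `p^{−ν_{n−1}}`, is the smallest
`p`-power clearing the entries of `g`, and satisfies `d(gg') ≤ d(g)d(g')` and
`d(g⁻¹) ≤ d(g)^{n−1}`. -/
theorem stmt6 (p : ℕ) [Fact p.Prime] (n : ℕ) (hn : 2 ≤ n)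
    (g k₁ k₂ : Matrix.SpecialLinearGroup (Fin n) ℚ_[p])
    (hk₁ : ∀ i j, ‖(k₁ : Matrix (Fin n) (Fin n) ℚ_[p]) i j‖ ≤ 1)
    (hk₂ : ∀ i j, ‖(k₂ : Matrix (Fin n) (Fin n) ℚ_[p]) i j‖ ≤ 1)
    (ν : Fin n → ℤ) (hmono : ∀ i j : Fin n, i ≤ j → ν j ≤ ν i) (hsum : ∑ i, ν i = 0)
    (hcartan : (g : Matrix (Fin n) (Fin n) ℚ_[p]) =
      (k₁ : Matrix (Fin n) (Fin n) ℚ_[p]) *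
        Matrix.diagonal (fun i => (p : ℚ_[p]) ^ (ν i)) *
        (k₂ : Matrix (Fin n) (Fin n) ℚ_[p])) :
    ((p : ℝ) ^ (padicDenExp p n (g : Matrix (Fin n) (Fin n) ℚ_[p]))
        = (p : ℝ) ^ (-(ν ⟨n - 1, by omega⟩))) ∧
    (∀ i j, ‖(p : ℚ_[p]) ^ (padicDenExp p n (g : Matrix (Fin n) (Fin n) ℚ_[p])) *
        (g : Matrix (Fin n) (Fin n) ℚ_[p]) i j‖ ≤ 1) ∧
    (∀ g' : Matrix.SpecialLinearGroup (Fin n) ℚ_[p],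
      padicDenExp p n ((g * g' : Matrix.SpecialLinearGroup (Fin n) ℚ_[p]) :
          Matrix (Fin n) (Fin n) ℚ_[p]) ≤
        padicDenExp p n (g : Matrix (Fin n) (Fin n) ℚ_[p]) +
          padicDenExp p n (g' : Matrix (Fin n) (Fin n) ℚ_[p])) ∧
    padicDenExp p n ((g⁻¹ : Matrix.SpecialLinearGroup (Fin n) ℚ_[p]) :
        Matrix (Fin n) (Fin n) ℚ_[p]) ≤
      (n - 1) * padicDenExp p n (g : Matrix (Fin n) (Fin n) ℚ_[p]) := by
  set i₀ : Fin n := ⟨n - 1, by omega⟩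
  have hmin : ∀ i, ν i₀ ≤ ν i := fun i => hmono i i₀ (Fin.le_def.2 (by simp only [i₀]; omega))
  have hnonpos : ν i₀ ≤ 0 := by
    obtain ⟨i, -, hi⟩ := Finset.exists_le_of_sum_le (f := ν) (g := 0) ⟨i₀, Finset.mem_univ _⟩
      (by simp [hsum])
    exact (hmin i).trans hi
  have hden : padicDenExp p n g = (-ν i₀).toNat := by
    rw [hcartan, padicDenExp_mul_mul_eq_of_eq_zero k₁.det_coe k₂.det_coe
      (padicDenExp_eq_zero_iff.2 hk₁) (padicDenExp_eq_zero_iff.2 hk₂),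
      padicDenExp_diagonal_zpow hmin]
  refine ⟨?_, fun i j => ?_, fun g' => ?_, ?_⟩
  · rw [hden, ← zpow_natCast, Int.toNat_of_nonneg (neg_nonneg.2 hnonpos)]
  · exact (Padic.norm_prime_pow_mul_le_one_iff _ _).2 (norm_apply_le_prime_pow_padicDenExp _ i j)
  · rw [Matrix.SpecialLinearGroup.coe_mul]
    exact padicDenExp_mul_le _ _
  · rw [Matrix.SpecialLinearGroup.coe_inv]
    exact padicDenExp_adjugate_le _
end
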